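/- arXiv:1511.06454 — 4 statements merged into one kernel-verified Lean document; each statement's English description precedes it below -/
import Mathlib

section
/- Let X be a mixture set, n a positive integer, and ≽ a binary relation on X^n. Then ≽ satisfies axioms F1–F5 if and only if there exists a pair (u, w) providing an AA representation for ≽ on X^n. -/
/-!
Axioms F1, F3 and F4 say that `≽` is a continuous, independent weak order on the mixture set
`X^n`, so by the Herstein–Milnor theorem it is represented by a mixture-linear `U`. In that
theorem, on an order interval `[b, g]` with `g ≻ b` every `z` is indifferent to exactly
one mixture `g λ b` (existence by continuity and connectedness of `[0, 1]`, uniqueness because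
independence makes `λ ↦ g λ b` strictly increasing), and `z ↦ λ` is mixture-linear there. After
the affine normalisation sending a fixed pair `a₀ ≻ b₀` to `1` and `0`, these calibrations agree
on nested intervals and hence glue to a global `U`.

The `1/2`-mixture of `x[t ↦ a]` and `y[t ↦ b]` equals that of `x[t ↦ b]` and `y[t ↦ a]`, so
the increments of `U` in period `t` do not depend on the other periods and `U` is a sum of
one-period terms. Each term, like `u = U` on constant streams, is mixture-linear, and by F5 it
is monotone in `u`; hence it is `w_t u` plus a constant with `w_t ≥ 0`.
-/

/-- A mixture set: a set `X` with an operation `mix x l y` (written `xλy` in the paper),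
satisfying the Herstein–Milnor axioms for `l, m ∈ [0,1]`. -/
structure MixtureSpace (X : Type*) where
  mix : X → ℝ → X → X
  mix_one : ∀ x y : X, mix x 1 y = x
  mix_comm : ∀ (x y : X), ∀ l ∈ Set.Icc (0:ℝ) 1, mix x l y = mix y (1 - l) x
  mix_assoc : ∀ (x y : X), ∀ l ∈ Set.Icc (0:ℝ) 1, ∀ m ∈ Set.Icc (0:ℝ) 1,
    mix (mix x m y) l y = mix x (l * m) y

/-- `u : X → ℝ` is mixture linear. -/
def MixtureSpace.linear {X : Type*} (M : MixtureSpace X) (u : X → ℝ) : Prop :=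
  ∀ (x y : X), ∀ l ∈ Set.Icc (0:ℝ) 1, u (M.mix x l y) = l * u x + (1 - l) * u y

/-- Strict (asymmetric) part of a relation. -/
def strictP {α : Type*} (R : α → α → Prop) (x y : α) : Prop := R x y ∧ ¬ R y x

/-- Componentwise mixture of finite streams. -/
def mixStream {X : Type*} (M : MixtureSpace X) {n : ℕ} (x : Fin n → X) (l : ℝ)
    (y : Fin n → X) : Fin n → X := fun t => M.mix (x t) l (y t)

/-- Componentwise mixture of infinite streams. -/
def mixSeq {X : Type*} (M : MixtureSpace X) (x : ℕ → X) (l : ℝ) (y : ℕ → X) :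
    ℕ → X := fun t => M.mix (x t) l (y t)

/-! ### Finite-horizon axioms -/

/-- F1: weak order (complete and transitive). -/
def AxF1 {X : Type*} {n : ℕ} (R : (Fin n → X) → (Fin n → X) → Prop) : Prop :=
  (∀ x y, R x y ∨ R y x) ∧ Transitive R

/-- F2: non-triviality (a ≻ b for some a, b in the induced relation). -/
def AxF2 {X : Type*} {n : ℕ} (R : (Fin n → X) → (Fin n → X) → Prop) : Prop :=
  ∃ a b : X, strictP R (fun _ => a) (fun _ => b)

/-- F3: mixture independence. -/
def AxF3 {X : Type*} (M : MixtureSpace X) {n : ℕ}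
    (R : (Fin n → X) → (Fin n → X) → Prop) : Prop :=
  ∀ x y z : Fin n → X, ∀ l ∈ Set.Ioo (0:ℝ) 1,
    (R x y ↔ R (mixStream M x l z) (mixStream M y l z))

/-- F4: mixture continuity. -/
def AxF4 {X : Type*} (M : MixtureSpace X) {n : ℕ}
    (R : (Fin n → X) → (Fin n → X) → Prop) : Prop :=
  ∀ x y z : Fin n → X,
    IsClosed {l : ℝ | l ∈ Set.Icc (0:ℝ) 1 ∧ R (mixStream M x l z) y} ∧
    IsClosed {l : ℝ | l ∈ Set.Icc (0:ℝ) 1 ∧ R y (mixStream M x l z)}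

/-- F5: monotonicity. -/
def AxF5 {X : Type*} {n : ℕ} (R : (Fin n → X) → (Fin n → X) → Prop) : Prop :=
  ∀ x y : Fin n → X, (∀ t, R (fun _ => x t) (fun _ => y t)) → R x y

/-- `(u, w)` provides an AA representation for `R` on `X^n`. -/
def AARep {X : Type*} (M : MixtureSpace X) {n : ℕ}
    (R : (Fin n → X) → (Fin n → X) → Prop) (u : X → ℝ) (w : Fin n → ℝ) : Prop :=
  M.linear u ∧ (∃ a b : X, u a ≠ u b) ∧ (∀ t, 0 ≤ w t) ∧ (∃ t, 0 < w t) ∧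
  ∀ x y : Fin n → X, (R x y ↔ (∑ t, w t * u (x t)) ≥ ∑ t, w t * u (y t))

/-! ### Infinite-horizon notions -/

/-- Ultimately constant stream (equals `x0` from some period on). -/
def UltConst {X : Type*} (x0 : X) (x : ℕ → X) : Prop := ∃ T, ∀ t, T ≤ t → x t = x0

/-- Member of `X**`: ultimately constant or constant. -/
def InXSS {X : Type*} (x0 : X) (x : ℕ → X) : Prop :=
  UltConst x0 x ∨ ∃ a, ∀ t, x t = a

/-- `[a]_k`: the stream with `a` in period `k` and `x0` elsewhere. -/
def bracket {X : Type*} (x0 : X) (a : X) (k : ℕ) : ℕ → X :=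
  fun t => if t = k then a else x0

/-- `(x₁, …, x_{k−1}, a, x_{k+1}, …, x_T, x0, x0, …)`. -/
def truncMod {X : Type*} (x0 : X) (x : ℕ → X) (k : ℕ) (a : X) (T : ℕ) : ℕ → X :=
  fun t => if t = k then a else if t ≤ T then x t else x0

/-- I1: weak order. -/
def AxI1 {X : Type*} (R : (ℕ → X) → (ℕ → X) → Prop) : Prop :=
  (∀ x y, R x y ∨ R y x) ∧ Transitive R

/-- I2: non-triviality `a ≻ x0 ≻ b` in the induced relation. -/
def AxI2 {X : Type*} (x0 : X) (R : (ℕ → X) → (ℕ → X) → Prop) : Prop :=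
  ∃ a b : X, strictP R (fun _ => a) (fun _ => x0) ∧ strictP R (fun _ => x0) (fun _ => b)

/-- I3: mixture independence on `X**`. -/
def AxI3 {X : Type*} (M : MixtureSpace X) (x0 : X)
    (R : (ℕ → X) → (ℕ → X) → Prop) : Prop :=
  ∀ x y z : ℕ → X, InXSS x0 x → InXSS x0 y → InXSS x0 z →
    ∀ l ∈ Set.Ioo (0:ℝ) 1, (R x y ↔ R (mixSeq M x l z) (mixSeq M y l z))

/-- I4: mixture continuity. -/
def AxI4 {X : Type*} (M : MixtureSpace X) (x0 : X)
    (R : (ℕ → X) → (ℕ → X) → Prop) : Prop :=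
  ∀ x z : ℕ → X, InXSS x0 x → InXSS x0 z → ∀ y : ℕ → X,
    IsClosed {l : ℝ | l ∈ Set.Icc (0:ℝ) 1 ∧ R (mixSeq M x l z) y} ∧
    IsClosed {l : ℝ | l ∈ Set.Icc (0:ℝ) 1 ∧ R y (mixSeq M x l z)}

/-- I5: monotonicity. -/
def AxI5 {X : Type*} (R : (ℕ → X) → (ℕ → X) → Prop) : Prop :=
  ∀ x y : ℕ → X, (∀ t, R (fun _ => x t) (fun _ => y t)) → R x y

/-- I6: convergence. -/
def AxI6 {X : Type*} (x0 : X) (R : (ℕ → X) → (ℕ → X) → Prop) : Prop :=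
  ∀ (x : ℕ → X) (a : X) (k : ℕ),
    (strictP R (bracket x0 a k) (bracket x0 (x k) k) →
      ∃ Tp, k ≤ Tp ∧ ∀ T, Tp ≤ T → R (truncMod x0 x k a T) x) ∧
    (strictP R (bracket x0 (x k) k) (bracket x0 a k) →
      ∃ Tm, k ≤ Tm ∧ ∀ T, Tm ≤ T → R x (truncMod x0 x k a T))

/-- `(u, w)` provides an AA representation for `R` on `X^∞` (with its
discounted-utility series converging for every stream). -/
def AARepInf {X : Type*} (M : MixtureSpace X)
    (R : (ℕ → X) → (ℕ → X) → Prop) (u : X → ℝ) (w : ℕ → ℝ) : Prop :=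
  M.linear u ∧ (∃ a b : X, u a ≠ u b) ∧ (∀ t, 0 ≤ w t) ∧ (∃ t, 0 < w t) ∧
  ∃ U : (ℕ → X) → ℝ,
    (∀ x : ℕ → X, Filter.Tendsto (fun N => ∑ t ∈ Finset.range N, w t * u (x t))
      Filter.atTop (nhds (U x))) ∧
    ∀ x y : ℕ → X, (R x y ↔ U x ≥ U y)

/-! ### Exponential discounting -/

/-- F2′: essentiality of period 1. -/
def AxF2' {X : Type*} {n : ℕ} (R : (Fin n → X) → (Fin n → X) → Prop)
    (h0 : 0 < n) : Prop :=
  ∃ (a b : X) (x : Fin n → X),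
    strictP R (Function.update x ⟨0, h0⟩ a) (Function.update x ⟨0, h0⟩ b)

/-- F6: impatience. -/
def AxF6 {X : Type*} {n : ℕ} (R : (Fin n → X) → (Fin n → X) → Prop)
    (h0 : 0 < n) (h1 : 1 < n) : Prop :=
  ∀ a b : X, strictP R (fun _ => a) (fun _ => b) →
    ∀ x : Fin n → X,
      strictP R (Function.update (Function.update x ⟨0, h0⟩ a) ⟨1, h1⟩ b)
               (Function.update (Function.update x ⟨0, h0⟩ b) ⟨1, h1⟩ a)

/-- `(x₂, …, xₙ, a)`. -/
def shiftApp {X : Type*} {n : ℕ} (x : Fin n → X) (a : X) : Fin n → X :=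
  fun t => if h : (t : ℕ) + 1 < n then x ⟨(t : ℕ) + 1, h⟩ else a

/-- F7: stationarity. -/
def AxF7 {X : Type*} {n : ℕ} (R : (Fin n → X) → (Fin n → X) → Prop)
    (h0 : 0 < n) : Prop :=
  ∀ (a : X) (x y : Fin n → X),
    (R (Function.update x ⟨0, h0⟩ a) (Function.update y ⟨0, h0⟩ a) ↔
     R (shiftApp x a) (shiftApp y a))

/-- `(u, δ)` provides an exponentially discounted expected utility representation. -/
def ExpRep {X : Type*} (M : MixtureSpace X) {n : ℕ}
    (R : (Fin n → X) → (Fin n → X) → Prop) (u : X → ℝ) (δ : ℝ) : Prop :=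
  M.linear u ∧ (∃ a b : X, u a ≠ u b) ∧ δ ∈ Set.Ioo (0:ℝ) 1 ∧
  ∀ x y : Fin n → X,
    (R x y ↔ (∑ t : Fin n, δ ^ (t : ℕ) * u (x t)) ≥ ∑ t : Fin n, δ ^ (t : ℕ) * u (y t))

/-- I2′: essentiality of period 1 (infinite horizon). -/
def AxI2' {X : Type*} (x0 : X) (R : (ℕ → X) → (ℕ → X) → Prop) : Prop :=
  ∃ a b : X, strictP R (bracket x0 a 0) (fun _ => x0) ∧
    strictP R (fun _ => x0) (bracket x0 b 0)

/-- `(a, x₁, x₂, …)`. -/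
def consSeq {X : Type*} (a : X) (x : ℕ → X) : ℕ → X :=
  fun t => if t = 0 then a else x (t - 1)

/-- I7: stationarity (infinite horizon). -/
def AxI7 {X : Type*} (R : (ℕ → X) → (ℕ → X) → Prop) : Prop :=
  ∀ (a : X) (x y : ℕ → X), (R (consSeq a x) (consSeq a y) ↔ R x y)

/-- `(u, δ)` provides an exponentially discounted expected utility representation
on `X^∞`, with converging series. -/
def ExpRepInf {X : Type*} (M : MixtureSpace X)
    (R : (ℕ → X) → (ℕ → X) → Prop) (u : X → ℝ) (δ : ℝ) : Prop :=
  M.linear u ∧ (∃ a b : X, u a ≠ u b) ∧ δ ∈ Set.Ioo (0:ℝ) 1 ∧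
  ∃ U : (ℕ → X) → ℝ,
    (∀ x : ℕ → X, Filter.Tendsto (fun N => ∑ t ∈ Finset.range N, δ ^ t * u (x t))
      Filter.atTop (nhds (U x))) ∧
    ∀ x y : ℕ → X, (R x y ↔ U x ≥ U y)

/-! ### Semi-hyperbolic discounting -/

/-- The SH(T) discount function at (1-based) period `t`:
`D 1 = 1`, `D t = β₁⋯β_{t−1} δ^{t−1}` for `2 ≤ t ≤ T`,
`D t = β₁⋯β_{T−1} δ^{t−1}` for `t > T`. -/
noncomputable def SHD (T : ℕ) (β : ℕ → ℝ) (δ : ℝ) (t : ℕ) : ℝ :=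
  (∏ i ∈ Finset.Icc 1 (min t T - 1), β i) * δ ^ (t - 1)

/-- Parameter restrictions: `0 < β₁ ≤ … ≤ β_{T−1} ≤ 1` and `δ ∈ (0,1)`. -/
def SHParams (T : ℕ) (β : ℕ → ℝ) (δ : ℝ) : Prop :=
  (∀ i : ℕ, 1 ≤ i → i ≤ T - 1 → 0 < β i ∧ β i ≤ 1) ∧
  (∀ i : ℕ, 1 ≤ i → i + 1 ≤ T - 1 → β i ≤ β (i + 1)) ∧
  δ ∈ Set.Ioo (0:ℝ) 1

/-- `(u, β, δ)` provides an SH(T) discounted expected utility representation on `X^n`. -/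
def SHRep {X : Type*} (M : MixtureSpace X) {n : ℕ}
    (R : (Fin n → X) → (Fin n → X) → Prop)
    (T : ℕ) (β : ℕ → ℝ) (δ : ℝ) (u : X → ℝ) : Prop :=
  M.linear u ∧ (∃ a b : X, u a ≠ u b) ∧ SHParams T β δ ∧
  ∀ x y : Fin n → X,
    (R x y ↔ (∑ s : Fin n, SHD T β δ ((s : ℕ) + 1) * u (x s)) ≥
      ∑ s : Fin n, SHD T β δ ((s : ℕ) + 1) * u (y s))

/-- F2″: essentiality of (1-based) periods `1, …, T`. -/
def AxF2'' {X : Type*} {n : ℕ} (R : (Fin n → X) → (Fin n → X) → Prop)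
    (T : ℕ) (hTn : T ≤ n) : Prop :=
  ∃ (a b : X) (x : Fin n → X), ∀ i : ℕ, ∀ hi : i < T,
    strictP R (Function.update x ⟨i, lt_of_lt_of_le hi hTn⟩ a)
             (Function.update x ⟨i, lt_of_lt_of_le hi hTn⟩ b)

/-- F6′: impatience between (1-based) periods `T` and `T+1`. -/
def AxF6' {X : Type*} {n : ℕ} (R : (Fin n → X) → (Fin n → X) → Prop)
    (T : ℕ) (h1 : T - 1 < n) (h2 : T < n) : Prop :=
  ∀ a b : X, strictP R (fun _ => a) (fun _ => b) →
    ∀ x : Fin n → X,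
      strictP R (Function.update (Function.update x ⟨T-1, h1⟩ a) ⟨T, h2⟩ b)
               (Function.update (Function.update x ⟨T-1, h1⟩ b) ⟨T, h2⟩ a)

/-- Delete (0-based) coordinate `i`, shift the rest left, and append `a` at the end. -/
def delIns {X : Type*} {n : ℕ} (x : Fin n → X) (i : ℕ) (a : X) : Fin n → X :=
  fun s => if (s : ℕ) < i then x s
    else if h : (s : ℕ) + 1 < n then x ⟨(s : ℕ) + 1, h⟩ else a

/-- F7′: stationarity from (1-based) period `T`. -/
def AxF7' {X : Type*} {n : ℕ} (R : (Fin n → X) → (Fin n → X) → Prop)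
    (T : ℕ) (h1 : T - 1 < n) : Prop :=
  ∀ (a : X) (x y : Fin n → X), (∀ s : Fin n, (s : ℕ) < T - 1 → x s = y s) →
    (R (Function.update x ⟨T-1, h1⟩ a) (Function.update y ⟨T-1, h1⟩ a) ↔
     R (delIns x (T-1) a) (delIns y (T-1) a))

/-- `(x₁, …, x_{t−2}, a, b, x_{t+2}, …, xₙ, x_{t−1})` where `i` is the 0-based
index of period `t` (so `i = t − 1`). -/
def ebShiftFin {X : Type*} {n : ℕ} (x : Fin n → X) (i : ℕ) (hi : i - 1 < n)
    (a b : X) : Fin n → X :=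
  fun s => if (s : ℕ) < i - 1 then x s
    else if (s : ℕ) = i - 1 then a
    else if (s : ℕ) = i then b
    else if h : (s : ℕ) + 1 < n then x ⟨(s : ℕ) + 1, h⟩
    else x ⟨i - 1, hi⟩

/-- F8: early bias. -/
def AxF8 {X : Type*} {n : ℕ} (R : (Fin n → X) → (Fin n → X) → Prop)
    (T : ℕ) (hTn : T < n) : Prop :=
  ∀ a b c d : X,
    strictP R (fun _ => a) (fun _ => c) → strictP R (fun _ => d) (fun _ => b) →
    ∀ x : Fin n → X, ∀ i : ℕ, ∀ hi1 : 1 ≤ i, ∀ hi2 : i ≤ T - 1,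
      (R (Function.update (Function.update x ⟨i, by omega⟩ a) ⟨i+1, by omega⟩ b)
         (Function.update (Function.update x ⟨i, by omega⟩ c) ⟨i+1, by omega⟩ d) ∧
       R (Function.update (Function.update x ⟨i, by omega⟩ c) ⟨i+1, by omega⟩ d)
         (Function.update (Function.update x ⟨i, by omega⟩ a) ⟨i+1, by omega⟩ b)) →
      R (ebShiftFin x i (by omega) a b) (ebShiftFin x i (by omega) c d)

/-- `(u, β, δ)` provides an SH(T) discounted expected utility representation on `X^∞`. -/
def SHRepInf {X : Type*} (M : MixtureSpace X)
    (R : (ℕ → X) → (ℕ → X) → Prop)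
    (T : ℕ) (β : ℕ → ℝ) (δ : ℝ) (u : X → ℝ) : Prop :=
  M.linear u ∧ (∃ a b : X, u a ≠ u b) ∧ SHParams T β δ ∧
  ∃ U : (ℕ → X) → ℝ,
    (∀ x : ℕ → X, Filter.Tendsto
      (fun N => ∑ t ∈ Finset.range N, SHD T β δ (t + 1) * u (x t))
      Filter.atTop (nhds (U x))) ∧
    ∀ x y : ℕ → X, (R x y ↔ U x ≥ U y)

/-- I2″: essentiality of (1-based) periods `1, …, T`. -/
def AxI2'' {X : Type*} (x0 : X) (R : (ℕ → X) → (ℕ → X) → Prop) (T : ℕ) : Prop :=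
  ∃ a b : X, ∀ t : ℕ, t < T →
    strictP R (bracket x0 a t) (fun _ => x0) ∧ strictP R (fun _ => x0) (bracket x0 b t)

/-- Delete (0-based) coordinate `i` of an infinite stream. -/
def delSeq {X : Type*} (x : ℕ → X) (i : ℕ) : ℕ → X :=
  fun t => if t < i then x t else x (t + 1)

/-- I7′: stationarity from (1-based) period `T`. -/
def AxI7' {X : Type*} (R : (ℕ → X) → (ℕ → X) → Prop) (T : ℕ) : Prop :=
  ∀ (a : X) (x y : ℕ → X), (∀ t, t < T - 1 → x t = y t) →
    (R (Function.update x (T-1) a) (Function.update y (T-1) a) ↔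
     R (delSeq x (T-1)) (delSeq y (T-1)))

/-- `(x₁, …, x_{t−2}, a, b, x_{t+2}, …)` where `i = t − 1` (0-based index of period `t`). -/
def ebShiftSeq {X : Type*} (x : ℕ → X) (i : ℕ) (a b : X) : ℕ → X :=
  fun s => if s < i - 1 then x s
    else if s = i - 1 then a
    else if s = i then b
    else x (s + 1)

/-- I8: early bias (infinite horizon). -/
def AxI8 {X : Type*} (R : (ℕ → X) → (ℕ → X) → Prop) (T : ℕ) : Prop :=
  ∀ a b c d : X,
    strictP R (fun _ => a) (fun _ => c) → strictP R (fun _ => d) (fun _ => b) →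
    ∀ x : ℕ → X, ∀ i : ℕ, 1 ≤ i → i ≤ T - 1 →
      (R (Function.update (Function.update x i a) (i+1) b)
         (Function.update (Function.update x i c) (i+1) d) ∧
       R (Function.update (Function.update x i c) (i+1) d)
         (Function.update (Function.update x i a) (i+1) b)) →
      R (ebShiftSeq x i a b) (ebShiftSeq x i c d)

namespace MixtureSpace

variable {X : Type*} (M : MixtureSpace X)

lemma mix_zero (x y : X) : M.mix x 0 y = y := by
  rw [M.mix_comm x y 0 (by norm_num), sub_zero, M.mix_one]

lemma mix_self (x : X) {l : ℝ} (hl : l ∈ Set.Icc (0:ℝ) 1) : M.mix x l x = x := by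
  simpa [mix_zero] using M.mix_assoc x x l hl 0 (by norm_num)

lemma mix_mix_mix_of_le (x y : X) {l p q : ℝ} (hl : l ∈ Set.Icc (0:ℝ) 1)
    (hp : p ∈ Set.Icc (0:ℝ) 1) (hq : q ∈ Set.Icc (0:ℝ) 1) (hqp : q ≤ p) :
    M.mix (M.mix x p y) l (M.mix x q y) = M.mix x (l * p + (1 - l) * q) y := by
  rcases hp.1.eq_or_lt with rfl | hp0
  · obtain rfl : q = 0 := le_antisymm hqp hq.1
    simp [mix_zero, M.mix_self _ hl]
  set A := M.mix x p y
  set c := q / p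
  have hc : c ∈ Set.Icc (0:ℝ) 1 := unitInterval.div_mem hq.1 hp.1 hqp
  have hl' := Set.Icc.mem_iff_one_sub_mem.1 hl
  have hc' := Set.Icc.mem_iff_one_sub_mem.1 hc
  have hlc := unitInterval.mul_mem hl' hc'
  have hxq : M.mix x q y = M.mix A c y := by
    rw [M.mix_assoc x y c hc p hp, div_mul_cancel₀ q hp0.ne']
  rw [hxq]
  calc M.mix A l (M.mix A c y)
      = M.mix (M.mix y (1 - c) A) (1 - l) A := by
        rw [M.mix_comm A _ l hl, M.mix_comm A y c hc]
    _ = M.mix A (1 - (1 - l) * (1 - c)) y := by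
        rw [M.mix_assoc y A _ hl' _ hc', M.mix_comm y A _ hlc]
    _ = M.mix x (l * p + (1 - l) * q) y := by
        rw [M.mix_assoc x y _ (Set.Icc.mem_iff_one_sub_mem.1 hlc) p hp]
        congr 1
        linear_combination (1 - l) * div_mul_cancel₀ q hp0.ne'

lemma mix_mix_mix (x y : X) {l p q : ℝ} (hl : l ∈ Set.Icc (0:ℝ) 1)
    (hp : p ∈ Set.Icc (0:ℝ) 1) (hq : q ∈ Set.Icc (0:ℝ) 1) :
    M.mix (M.mix x p y) l (M.mix x q y) = M.mix x (l * p + (1 - l) * q) y := by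
  rcases le_total q p with h | h
  · exact M.mix_mix_mix_of_le x y hl hp hq h
  · rw [M.mix_comm _ _ l hl,
      M.mix_mix_mix_of_le x y (Set.Icc.mem_iff_one_sub_mem.1 hl) hq hp h]
    ring_nf

def pi (ι : Type*) : MixtureSpace (ι → X) where
  mix x l y i := M.mix (x i) l (y i)
  mix_one _ _ := funext fun _ => M.mix_one _ _
  mix_comm _ _ l hl := funext fun _ => M.mix_comm _ _ l hl
  mix_assoc _ _ l hl m hm := funext fun _ => M.mix_assoc _ _ l hl m hm

lemma eq_add_mul_of_linear_of_monotone {u v : X → ℝ} (hu : M.linear u) (hv : M.linear v)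
    (hmono : ∀ a c, u c ≤ u a → v c ≤ v a) {A B : X} (hAB : u B < u A) (c : X) :
    v c = v B + (v A - v B) / (u A - u B) * (u c - u B) := by
  have hmix : ∀ x y z : X, ∀ l ∈ Set.Icc (0:ℝ) 1, u x = l * u y + (1 - l) * u z →
      v x = l * v y + (1 - l) * v z := fun x y z l hl hx => by
    rw [← hu y z l hl] at hx
    rw [← hv y z l hl]
    exact le_antisymm (hmono _ _ hx.le) (hmono _ _ hx.ge)
  have hd : u A - u B ≠ 0 := (sub_pos.2 hAB).ne'
  -- In each case one of `A`, `B`, `c` is a `u`-mixture of the other two.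
  rcases lt_or_ge (u c) (u B) with hcB | hBc
  · have hAc : u A - u c ≠ 0 := by linarith
    have e := hmix B A c _ (unitInterval.div_mem (by linarith) (by linarith)
      (by linarith : u B - u c ≤ u A - u c)) (by field_simp; ring)
    field_simp at e ⊢
    linear_combination -e
  rcases le_or_gt (u c) (u A) with hcA | hAc
  · have e := hmix c A B _ (unitInterval.div_mem (by linarith) (by linarith)
      (by linarith : u c - u B ≤ u A - u B)) (by field_simp; ring)
    field_simp at e ⊢
    linear_combination e
  · have hcB : u c - u B ≠ 0 := by linarith
    have e := hmix A c B _ (unitInterval.div_mem (by linarith) (by linarith)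
      (by linarith : u A - u B ≤ u c - u B)) (by field_simp; ring)
    field_simp at e ⊢
    linear_combination -e

variable {Y : Type*}

/-- A weak order on a mixture space satisfying the independence and continuity axioms of
Herstein and Milnor (F1, F3, F4 for an arbitrary mixture space). -/
structure IsMixtureOrder (N : MixtureSpace Y) (S : Y → Y → Prop) : Prop where
  total : ∀ x y, S x y ∨ S y x
  trans : ∀ ⦃x y z⦄, S x y → S y z → S x z
  mix_iff : ∀ x y z : Y, ∀ l ∈ Set.Ioo (0:ℝ) 1, (S x y ↔ S (N.mix x l z) (N.mix y l z))
  isClosed_mix_ge : ∀ x y z : Y, IsClosed {l : ℝ | l ∈ Set.Icc (0:ℝ) 1 ∧ S (N.mix x l z) y}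
  isClosed_mix_le : ∀ x y z : Y, IsClosed {l : ℝ | l ∈ Set.Icc (0:ℝ) 1 ∧ S y (N.mix x l z)}

def orderInterval (S : Y → Y → Prop) (g b : Y) : Set Y := {z | S g z ∧ S z b}

open Classical in
/-- The weight `l` with `g l b ∼ z`; it exists for `z ∈ orderInterval S g b`. -/
noncomputable def calib (N : MixtureSpace Y) (S : Y → Y → Prop) (g b z : Y) : ℝ :=
  if hz : ∃ l ∈ Set.Icc (0:ℝ) 1, AntisymmRel S (N.mix g l b) z then hz.choose else 0

noncomputable def normCalib (N : MixtureSpace Y) (S : Y → Y → Prop) (a₀ b₀ g b z : Y) : ℝ :=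
  (calib N S g b z - calib N S g b b₀) / (calib N S g b a₀ - calib N S g b b₀)

open Classical in
noncomputable def utility (N : MixtureSpace Y) (S : Y → Y → Prop) (a₀ b₀ z : Y) : ℝ :=
  if hz : ∃ p : Y × Y, {z, a₀, b₀} ⊆ orderInterval S p.1 p.2 then
    normCalib N S a₀ b₀ hz.choose.1 hz.choose.2 z
  else 0

namespace IsMixtureOrder

variable {N : MixtureSpace Y} {S : Y → Y → Prop}

lemma refl (h : IsMixtureOrder N S) (x : Y) : S x x := (h.total x x).elim id id

lemma strictP_of_strictP_of_le (h : IsMixtureOrder N S) {x y z : Y} (hxy : strictP S x y)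
    (hyz : S y z) : strictP S x z :=
  ⟨h.trans hxy.1 hyz, fun hzx => hxy.2 (h.trans hyz hzx)⟩

lemma strictP_of_le_of_strictP (h : IsMixtureOrder N S) {x y z : Y} (hxy : S x y)
    (hyz : strictP S y z) : strictP S x z :=
  ⟨h.trans hxy hyz.1, fun hzx => hyz.2 (h.trans hzx hxy)⟩

lemma le_iff_of_antisymmRel (h : IsMixtureOrder N S) {x x' y y' : Y}
    (hx : AntisymmRel S x x') (hy : AntisymmRel S y y') : S x y ↔ S x' y' :=
  ⟨fun hxy => h.trans hx.2 (h.trans hxy hy.1), fun hxy => h.trans hx.1 (h.trans hxy hy.2)⟩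

lemma mix_le_mix_left (h : IsMixtureOrder N S) {x y : Y} (hxy : S x y) (z : Y) {l : ℝ}
    (hl : l ∈ Set.Icc (0:ℝ) 1) : S (N.mix x l z) (N.mix y l z) := by
  rcases hl.1.eq_or_lt with rfl | hl0
  · simpa only [mix_zero] using h.refl z
  rcases hl.2.eq_or_lt with rfl | hl1
  · simpa only [mix_one] using hxy
  exact (h.mix_iff x y z l ⟨hl0, hl1⟩).1 hxy

lemma mix_le_mix (h : IsMixtureOrder N S) {x x' y y' : Y} (hx : S x x') (hy : S y y')
    {l : ℝ} (hl : l ∈ Set.Icc (0:ℝ) 1) : S (N.mix x l y) (N.mix x' l y') := by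
  refine h.trans (h.mix_le_mix_left hx y hl) ?_
  rw [N.mix_comm x' y l hl, N.mix_comm x' y' l hl]
  exact h.mix_le_mix_left hy x' (Set.Icc.mem_iff_one_sub_mem.1 hl)

lemma antisymmRel_mix (h : IsMixtureOrder N S) {x x' y y' : Y} (hx : AntisymmRel S x x')
    (hy : AntisymmRel S y y') {l : ℝ} (hl : l ∈ Set.Icc (0:ℝ) 1) :
    AntisymmRel S (N.mix x l y) (N.mix x' l y') :=
  ⟨h.mix_le_mix hx.1 hy.1 hl, h.mix_le_mix hx.2 hy.2 hl⟩

lemma strictP_mix_left (h : IsMixtureOrder N S) {x y : Y} (hxy : strictP S x y) (z : Y)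
    {l : ℝ} (hl : l ∈ Set.Ioc (0:ℝ) 1) : strictP S (N.mix x l z) (N.mix y l z) := by
  rcases hl.2.eq_or_lt with rfl | hl1
  · simpa only [mix_one] using hxy
  exact ⟨(h.mix_iff x y z l ⟨hl.1, hl1⟩).1 hxy.1,
    fun hyx => hxy.2 ((h.mix_iff y x z l ⟨hl.1, hl1⟩).2 hyx)⟩

lemma strictP_mix_mix (h : IsMixtureOrder N S) {x y : Y} (hxy : strictP S x y) {p q : ℝ}
    (hp : p ∈ Set.Icc (0:ℝ) 1) (hq : q ∈ Set.Icc (0:ℝ) 1) (hqp : q < p) :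
    strictP S (N.mix x p y) (N.mix x q y) := by
  have hp0 : 0 < p := hq.1.trans_lt hqp
  set A := N.mix x p y
  set c := q / p
  have hc : c ∈ Set.Icc (0:ℝ) 1 := unitInterval.div_mem hq.1 hp.1 hqp.le
  have hc1 : c < 1 := (div_lt_one hp0).2 hqp
  have hAy : strictP S A y := by
    simpa only [N.mix_self y hp] using h.strictP_mix_left hxy y ⟨hp0, hp.2⟩
  have hxq : N.mix x q y = N.mix A c y := by
    rw [N.mix_assoc x y c hc p hp, div_mul_cancel₀ q hp0.ne']
  have key := h.strictP_mix_left hAy A (l := 1 - c) ⟨by linarith, by linarith [hc.1]⟩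
  rwa [N.mix_self A (Set.Icc.mem_iff_one_sub_mem.1 hc), ← N.mix_comm A y c hc, ← hxq] at key

lemma mix_le_mix_iff (h : IsMixtureOrder N S) {x y : Y} (hxy : strictP S x y) {p q : ℝ}
    (hp : p ∈ Set.Icc (0:ℝ) 1) (hq : q ∈ Set.Icc (0:ℝ) 1) :
    S (N.mix x p y) (N.mix x q y) ↔ q ≤ p := by
  refine ⟨fun hS => not_lt.1 fun hpq => (h.strictP_mix_mix hxy hq hp hpq).2 hS, fun hqp => ?_⟩
  rcases hqp.eq_or_lt with rfl | hqp
  · exact h.refl _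
  · exact (h.strictP_mix_mix hxy hp hq hqp).1

/-- Solvability, from the connectedness of `[0, 1]`. -/
lemma exists_mix_antisymmRel (h : IsMixtureOrder N S) {x y z : Y} (hxz : S x z)
    (hzy : S z y) : ∃ l ∈ Set.Icc (0:ℝ) 1, AntisymmRel S (N.mix x l y) z := by
  obtain ⟨l, -, ⟨hl, hle⟩, -, hge⟩ := isPreconnected_closed_iff.1 isPreconnected_Icc _ _
    (h.isClosed_mix_ge x z y) (h.isClosed_mix_le x z y)
    (fun l hl => (h.total (N.mix x l y) z).imp (⟨hl, ·⟩) (⟨hl, ·⟩))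
    ⟨1, by simp, by simp, by simpa only [mix_one] using hxz⟩
    ⟨0, by simp, by simp, by simpa only [mix_zero] using hzy⟩
  exact ⟨l, hl, hle, hge⟩

lemma exists_orderInterval (h : IsMixtureOrder N S) [Nonempty Y] (s : Finset Y) :
    ∃ g b, ↑s ⊆ orderInterval S g b := by
  have : IsTrans Y S := ⟨h.trans⟩
  have : IsTrans Y (flip S) := ⟨fun _ _ _ hxy hyz => h.trans hyz hxy⟩
  obtain ⟨g, hg⟩ := Directed.finset_le (r := flip S) (f := id) (fun x y =>
    (h.total x y).elim (fun hxy => ⟨x, h.refl x, hxy⟩) fun hyx => ⟨y, hyx, h.refl y⟩) s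
  obtain ⟨b, hb⟩ := Directed.finset_le (r := S) (f := id) (fun x y =>
    (h.total x y).elim (fun hxy => ⟨y, hxy, h.refl y⟩) fun hyx => ⟨x, h.refl x, hyx⟩) s
  exact ⟨g, b, fun z hz => ⟨hg z hz, hb z hz⟩⟩

lemma strictP_of_mem_orderInterval (h : IsMixtureOrder N S) {g b a₀ b₀ : Y}
    (h₀ : strictP S a₀ b₀) (ha₀ : a₀ ∈ orderInterval S g b)
    (hb₀ : b₀ ∈ orderInterval S g b) : strictP S g b :=
  h.strictP_of_le_of_strictP ha₀.1 (h.strictP_of_strictP_of_le h₀ hb₀.2)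

lemma exists_orderInterval_of_strictP (h : IsMixtureOrder N S) {a₀ b₀ : Y}
    (h₀ : strictP S a₀ b₀) (x y : Y) :
    ∃ g b, x ∈ orderInterval S g b ∧ y ∈ orderInterval S g b ∧ a₀ ∈ orderInterval S g b ∧
      b₀ ∈ orderInterval S g b ∧ strictP S g b := by
  classical
  have : Nonempty Y := ⟨x⟩
  obtain ⟨g, b, hs⟩ := h.exists_orderInterval {x, y, a₀, b₀}
  have ha₀ := hs (by simp : a₀ ∈ _)
  have hb₀ := hs (by simp : b₀ ∈ _)
  exact ⟨g, b, hs (by simp), hs (by simp), ha₀, hb₀,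
    h.strictP_of_mem_orderInterval h₀ ha₀ hb₀⟩

lemma mix_mem_orderInterval (h : IsMixtureOrder N S) {g b z z' : Y}
    (hz : z ∈ orderInterval S g b) (hz' : z' ∈ orderInterval S g b) {l : ℝ}
    (hl : l ∈ Set.Icc (0:ℝ) 1) : N.mix z l z' ∈ orderInterval S g b := by
  constructor
  · simpa only [N.mix_self g hl] using h.mix_le_mix hz.1 hz'.1 hl
  · simpa only [N.mix_self b hl] using h.mix_le_mix hz.2 hz'.2 hl

lemma calib_spec (h : IsMixtureOrder N S) {g b z : Y} (hz : z ∈ orderInterval S g b) :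
    calib N S g b z ∈ Set.Icc (0:ℝ) 1 ∧ AntisymmRel S (N.mix g (calib N S g b z) b) z := by
  have hex := h.exists_mix_antisymmRel hz.1 hz.2
  rw [calib, dif_pos hex]
  exact hex.choose_spec

lemma calib_eq (h : IsMixtureOrder N S) {g b z : Y} (hgb : strictP S g b)
    (hz : z ∈ orderInterval S g b) {l : ℝ} (hl : l ∈ Set.Icc (0:ℝ) 1)
    (hlz : AntisymmRel S (N.mix g l b) z) : calib N S g b z = l := by
  obtain ⟨hc, hcz⟩ := h.calib_spec hz
  exact le_antisymm ((h.mix_le_mix_iff hgb hl hc).1 (h.trans hlz.1 hcz.2))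
    ((h.mix_le_mix_iff hgb hc hl).1 (h.trans hcz.1 hlz.2))

lemma calib_le_calib_iff (h : IsMixtureOrder N S) {g b z z' : Y} (hgb : strictP S g b)
    (hz : z ∈ orderInterval S g b) (hz' : z' ∈ orderInterval S g b) :
    S z z' ↔ calib N S g b z' ≤ calib N S g b z := by
  rw [← h.mix_le_mix_iff hgb (h.calib_spec hz).1 (h.calib_spec hz').1]
  exact h.le_iff_of_antisymmRel (h.calib_spec hz).2.symm (h.calib_spec hz').2.symm

lemma calib_lt_calib (h : IsMixtureOrder N S) {g b z z' : Y} (hgb : strictP S g b)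
    (hz : z ∈ orderInterval S g b) (hz' : z' ∈ orderInterval S g b)
    (hzz' : strictP S z z') : calib N S g b z' < calib N S g b z :=
  not_le.1 fun hle => hzz'.2 ((h.calib_le_calib_iff hgb hz' hz).2 hle)

lemma calib_mix (h : IsMixtureOrder N S) {g b z z' : Y} (hgb : strictP S g b)
    (hz : z ∈ orderInterval S g b) (hz' : z' ∈ orderInterval S g b) {l : ℝ}
    (hl : l ∈ Set.Icc (0:ℝ) 1) :
    calib N S g b (N.mix z l z') = l * calib N S g b z + (1 - l) * calib N S g b z' := by
  obtain ⟨hp, hpz⟩ := h.calib_spec hz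
  obtain ⟨hq, hqz⟩ := h.calib_spec hz'
  refine h.calib_eq hgb (h.mix_mem_orderInterval hz hz' hl) ?_ ?_
  · simpa only [smul_eq_mul] using
      convex_Icc (0:ℝ) 1 hp hq hl.1 (Set.Icc.mem_iff_one_sub_mem.1 hl).1 (add_sub_cancel l 1)
  · rw [← N.mix_mix_mix g b hl hp hq]
    exact h.antisymmRel_mix hpz hqz hl

lemma calib_of_subset (h : IsMixtureOrder N S) {g b g' b' z : Y} (hgb : strictP S g b)
    (hg : g ∈ orderInterval S g' b') (hb : b ∈ orderInterval S g' b')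
    (hz : z ∈ orderInterval S g b) :
    calib N S g' b' z =
      calib N S g' b' b + calib N S g b z * (calib N S g' b' g - calib N S g' b' b) := by
  obtain ⟨hθ, hθz⟩ := h.calib_spec hz
  have hg'b' := h.strictP_of_le_of_strictP hg.1 (h.strictP_of_strictP_of_le hgb hb.2)
  have hz' : z ∈ orderInterval S g' b' := ⟨h.trans hg.1 hz.1, h.trans hz.2 hb.2⟩
  have hmix := h.mix_mem_orderInterval hg hb hθ
  have hcalib : calib N S g' b' z = calib N S g' b' (N.mix g (calib N S g b z) b) :=
    le_antisymm ((h.calib_le_calib_iff hg'b' hmix hz').1 hθz.1)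
      ((h.calib_le_calib_iff hg'b' hz' hmix).1 hθz.2)
  rw [hcalib, h.calib_mix hg'b' hg hb hθ]
  ring

lemma normCalib_of_subset (h : IsMixtureOrder N S) {a₀ b₀ g b g' b' z : Y}
    (h₀ : strictP S a₀ b₀) (ha₀ : a₀ ∈ orderInterval S g b) (hb₀ : b₀ ∈ orderInterval S g b)
    (hz : z ∈ orderInterval S g b) (hg : g ∈ orderInterval S g' b')
    (hb : b ∈ orderInterval S g' b') :
    normCalib N S a₀ b₀ g' b' z = normCalib N S a₀ b₀ g b z := by
  have hgb := h.strictP_of_mem_orderInterval h₀ ha₀ hb₀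
  have hk := sub_pos.2 (h.calib_lt_calib (h.strictP_of_mem_orderInterval hgb hg hb) hg hb hgb)
  have hsub : ∀ p q : ℝ, (calib N S g' b' b + p * (calib N S g' b' g - calib N S g' b' b)) -
      (calib N S g' b' b + q * (calib N S g' b' g - calib N S g' b' b)) =
      (calib N S g' b' g - calib N S g' b' b) * (p - q) := fun p q => by ring
  rw [normCalib, normCalib, h.calib_of_subset hgb hg hb hz, h.calib_of_subset hgb hg hb ha₀,
    h.calib_of_subset hgb hg hb hb₀, hsub, hsub, mul_div_mul_left _ _ hk.ne']

lemma utility_eq (h : IsMixtureOrder N S) {a₀ b₀ g b z : Y} (h₀ : strictP S a₀ b₀)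
    (ha₀ : a₀ ∈ orderInterval S g b) (hb₀ : b₀ ∈ orderInterval S g b)
    (hz : z ∈ orderInterval S g b) :
    utility N S a₀ b₀ z = normCalib N S a₀ b₀ g b z := by
  classical
  have hex : ∃ p : Y × Y, {z, a₀, b₀} ⊆ orderInterval S p.1 p.2 :=
    ⟨(g, b), by simp [Set.insert_subset_iff, hz, ha₀, hb₀]⟩
  rw [utility, dif_pos hex]
  set p := hex.choose
  have hp : {z, a₀, b₀} ⊆ orderInterval S p.1 p.2 := hex.choose_spec
  have : Nonempty Y := ⟨a₀⟩
  obtain ⟨g', b', hsup⟩ := h.exists_orderInterval {g, b, p.1, p.2}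
  rw [← h.normCalib_of_subset h₀ (hp (by simp)) (hp (by simp)) (hp (by simp))
      (hsup (by simp)) (hsup (by simp)),
    h.normCalib_of_subset h₀ ha₀ hb₀ hz (hsup (by simp)) (hsup (by simp))]

lemma le_iff_utility_le (h : IsMixtureOrder N S) {a₀ b₀ : Y} (h₀ : strictP S a₀ b₀)
    (x y : Y) : S x y ↔ utility N S a₀ b₀ y ≤ utility N S a₀ b₀ x := by
  obtain ⟨g, b, hx, hy, ha₀, hb₀, hgb⟩ := h.exists_orderInterval_of_strictP h₀ x y
  rw [h.utility_eq h₀ ha₀ hb₀ hx, h.utility_eq h₀ ha₀ hb₀ hy, normCalib, normCalib,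
    div_le_div_iff_of_pos_right (sub_pos.2 (h.calib_lt_calib hgb ha₀ hb₀ h₀)),
    sub_le_sub_iff_right, h.calib_le_calib_iff hgb hx hy]

lemma utility_mix (h : IsMixtureOrder N S) {a₀ b₀ : Y} (h₀ : strictP S a₀ b₀)
    (x y : Y) {l : ℝ} (hl : l ∈ Set.Icc (0:ℝ) 1) :
    utility N S a₀ b₀ (N.mix x l y) =
      l * utility N S a₀ b₀ x + (1 - l) * utility N S a₀ b₀ y := by
  obtain ⟨g, b, hx, hy, ha₀, hb₀, hgb⟩ := h.exists_orderInterval_of_strictP h₀ x y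
  have hden := (sub_pos.2 (h.calib_lt_calib hgb ha₀ hb₀ h₀)).ne'
  rw [h.utility_eq h₀ ha₀ hb₀ hx, h.utility_eq h₀ ha₀ hb₀ hy,
    h.utility_eq h₀ ha₀ hb₀ (h.mix_mem_orderInterval hx hy hl), normCalib, normCalib,
    normCalib, h.calib_mix hgb hx hy hl]
  field_simp
  ring

/-- The Herstein–Milnor theorem. -/
theorem exists_linear_utility (h : IsMixtureOrder N S) :
    ∃ U : Y → ℝ, N.linear U ∧ ∀ x y, S x y ↔ U y ≤ U x := by
  by_cases hstrict : ∃ a₀ b₀, strictP S a₀ b₀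
  · obtain ⟨a₀, b₀, h₀⟩ := hstrict
    exact ⟨utility N S a₀ b₀, fun x y l hl => h.utility_mix h₀ x y hl, h.le_iff_utility_le h₀⟩
  · refine ⟨fun _ => 0, fun _ _ l _ => by ring, fun x y => ⟨fun _ => le_rfl, fun _ => ?_⟩⟩
    by_contra hxy
    exact hstrict ⟨y, x, (h.total x y).resolve_left hxy, hxy⟩

end IsMixtureOrder

lemma isMixtureOrder_of_linear {N : MixtureSpace Y} {S : Y → Y → Prop} {U : Y → ℝ}
    (hU : N.linear U) (hS : ∀ x y, S x y ↔ U y ≤ U x) : IsMixtureOrder N S where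
  total x y := by simp only [hS]; exact le_total _ _
  trans x y z hxy hyz := by rw [hS] at *; linarith
  mix_iff x y z l hl := by
    simp only [hS, hU _ _ l (Set.Ioo_subset_Icc_self hl)]
    constructor <;> intro h <;> nlinarith [hl.1]
  isClosed_mix_ge x y z := by
    have hset : {l : ℝ | l ∈ Set.Icc (0:ℝ) 1 ∧ S (N.mix x l z) y} =
        Set.Icc 0 1 ∩ {l | U y ≤ l * U x + (1 - l) * U z} := by
      ext l
      exact and_congr_right fun hl => by rw [Set.mem_ofPred_eq, hS, hU x z l hl]
    rw [hset]
    exact isClosed_Icc.inter (isClosed_le continuous_const (by fun_prop))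
  isClosed_mix_le x y z := by
    have hset : {l : ℝ | l ∈ Set.Icc (0:ℝ) 1 ∧ S y (N.mix x l z)} =
        Set.Icc 0 1 ∩ {l | l * U x + (1 - l) * U z ≤ U y} := by
      ext l
      exact and_congr_right fun hl => by rw [Set.mem_ofPred_eq, hS, hU x z l hl]
    rw [hset]
    exact isClosed_Icc.inter (isClosed_le (by fun_prop) continuous_const)

end MixtureSpace

lemma eq_add_sum_update_sub {ι α : Type*} [Fintype ι] [DecidableEq ι] {F : (ι → α) → ℝ}
    (hF : ∀ x y i a b, F (Function.update x i a) - F (Function.update x i b) =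
      F (Function.update y i a) - F (Function.update y i b))
    (c x : ι → α) : F x = F c + ∑ i, (F (Function.update c i (x i)) - F c) := by
  suffices h : ∀ s : Finset ι,
      F (s.piecewise x c) = F c + ∑ i ∈ s, (F (Function.update c i (x i)) - F c) by
    simpa using h Finset.univ
  intro s
  induction s using Finset.induction_on with
  | empty => simp
  | insert i s hi ih =>
    have hci : s.piecewise x c i = c i := s.piecewise_eq_of_notMem x c hi
    have hstep := hF (s.piecewise x c) c i (x i) (c i)
    rw [← hci, Function.update_eq_self, hci, Function.update_eq_self] at hstep
    rw [Finset.piecewise_insert, Finset.sum_insert hi]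
    linarith

namespace MixtureSpace

variable {X : Type*} (M : MixtureSpace X) {ι : Type*}

lemma linear_comp_const {U : (ι → X) → ℝ} (hU : (M.pi ι).linear U) :
    M.linear fun a => U fun _ => a :=
  fun a b l hl => hU (fun _ => a) (fun _ => b) l hl

lemma linear_comp_update [DecidableEq ι] {U : (ι → X) → ℝ} (hU : (M.pi ι).linear U)
    (c : ι → X) (i : ι) : M.linear fun a => U (Function.update c i a) := by
  intro a b l hl
  show U _ = _
  rw [← hU _ _ l hl]
  congr 1
  funext j
  by_cases hj : j = i
  · subst hj; simp [pi]
  · simp [pi, hj, M.mix_self _ hl]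

lemma linear_update_sub_update [DecidableEq ι] {U : (ι → X) → ℝ} (hU : (M.pi ι).linear U)
    (x y : ι → X) (i : ι) (a b : X) :
    U (Function.update x i a) - U (Function.update x i b) =
      U (Function.update y i a) - U (Function.update y i b) := by
  have hswap : (M.pi ι).mix (Function.update x i a) (1/2) (Function.update y i b) =
      (M.pi ι).mix (Function.update x i b) (1/2) (Function.update y i a) := by
    funext j
    by_cases hj : j = i
    · subst hj
      simp only [pi, Function.update_self]
      rw [M.mix_comm a b _ (by norm_num)]
      norm_num
    · simp [pi, hj]
  have h := congrArg U hswap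
  rw [hU _ _ _ (by norm_num), hU _ _ _ (by norm_num)] at h
  linarith

lemma linear_weighted_sum [Fintype ι] {u : X → ℝ} (hu : M.linear u) (w : ι → ℝ) :
    (M.pi ι).linear fun x => ∑ t, w t * u (x t) := by
  intro x y l hl
  simp only [pi, hu _ _ l hl, Finset.mul_sum, ← Finset.sum_add_distrib]
  exact Finset.sum_congr rfl fun t _ => by ring

lemma exists_weights_of_linear [Fintype ι] [DecidableEq ι] {U : (ι → X) → ℝ}
    (hU : (M.pi ι).linear U)
    (hmono : ∀ x y, (∀ t, U (fun _ => y t) ≤ U (fun _ => x t)) → U y ≤ U x)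
    {a b : X} (hab : U (fun _ => b) < U (fun _ => a)) :
    ∃ w : ι → ℝ, (∀ t, 0 ≤ w t) ∧
      ∀ x, U x = U (fun _ => b) + ∑ t, w t * (U (fun _ => x t) - U (fun _ => b)) := by
  have hv_mono : ∀ t a d, U (fun _ => d) ≤ U (fun _ => a) →
      U (Function.update (fun _ => b) t d) ≤ U (Function.update (fun _ => b) t a) :=
    fun t a d had => hmono _ _ fun s => by
      by_cases hs : s = t
      · subst hs; simpa using had
      · simp [hs]
  have haff := fun t => M.eq_add_mul_of_linear_of_monotone (M.linear_comp_const hU)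
    (M.linear_comp_update hU (fun _ => b) t) (hv_mono t) hab
  refine ⟨fun t => (U (Function.update (fun _ => b) t a) - U (fun _ => b)) /
    (U (fun _ => a) - U (fun _ => b)), fun t => div_nonneg ?_ (sub_pos.2 hab).le, fun x => ?_⟩
  · simpa using sub_nonneg.2 (hv_mono t a b hab.le)
  · rw [eq_add_sum_update_sub (M.linear_update_sub_update hU) (fun _ => b) x]
    refine congrArg _ (Finset.sum_congr rfl fun t _ => ?_)
    have hbt : Function.update (fun _ => b) t b = fun _ : ι => b := Function.update_eq_self t _
    rw [haff t (x t), hbt]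
    ring

end MixtureSpace

section FiniteHorizon

open MixtureSpace

variable {X : Type*} {M : MixtureSpace X} {n : ℕ} {R : (Fin n → X) → (Fin n → X) → Prop}

lemma exists_aaRep_of_axioms (h1 : AxF1 R) (h2 : AxF2 R) (h3 : AxF3 M R) (h4 : AxF4 M R)
    (h5 : AxF5 R) : ∃ (u : X → ℝ) (w : Fin n → ℝ), AARep M R u w := by
  obtain ⟨a, b, hab⟩ := h2
  have hR : IsMixtureOrder (M.pi (Fin n)) R :=
    ⟨h1.1, h1.2, h3, fun x y z => (h4 x y z).1, fun x y z => (h4 x y z).2⟩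
  obtain ⟨U, hU, hUR⟩ := hR.exists_linear_utility
  have hab' : U (fun _ => b) < U (fun _ => a) := not_le.1 fun h => hab.2 ((hUR _ _).2 h)
  obtain ⟨w, hw, hUw⟩ := M.exists_weights_of_linear hU
    (fun x y hxy => (hUR x y).1 (h5 x y fun t => (hUR _ _).2 (hxy t))) hab'
  have hrep : ∀ x y, R x y ↔ ∑ t, w t * U (fun _ => x t) ≥ ∑ t, w t * U (fun _ => y t) := by
    intro x y
    simp only [hUR, hUw x, hUw y, mul_sub, Finset.sum_sub_distrib]
    constructor <;> intro h <;> linarith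
  refine ⟨_, w, M.linear_comp_const hU, ⟨a, b, hab'.ne'⟩, hw, ?_, hrep⟩
  by_contra! hw0
  exact hab.2 ((hrep _ _).2 (by simp [le_antisymm (hw0 _) (hw _)]))

lemma axioms_of_aaRep {u : X → ℝ} {w : Fin n → ℝ} (hrep : AARep M R u w) :
    AxF1 R ∧ AxF2 R ∧ AxF3 M R ∧ AxF4 M R ∧ AxF5 R := by
  obtain ⟨hu, ⟨a, b, hab⟩, hw, ⟨t₀, ht₀⟩, hR⟩ := hrep
  have hR' : IsMixtureOrder (M.pi (Fin n)) R :=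
    isMixtureOrder_of_linear (M.linear_weighted_sum hu w) fun x y => hR x y
  have hW : 0 < ∑ t, w t := Finset.sum_pos' (fun t _ => hw t) ⟨t₀, Finset.mem_univ _, ht₀⟩
  have hconst : ∀ c d : X, R (fun _ => c) (fun _ => d) ↔ u d ≤ u c := fun c d => by
    rw [hR, ge_iff_le, ← Finset.sum_mul, ← Finset.sum_mul, mul_le_mul_iff_right₀ hW]
  refine ⟨⟨hR'.total, hR'.trans⟩, ?_, hR'.mix_iff, fun x y z => ⟨hR'.isClosed_mix_ge x y z,
    hR'.isClosed_mix_le x y z⟩, fun x y hxy => (hR x y).2 ?_⟩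
  · rcases hab.lt_or_gt with hlt | hlt
    · exact ⟨b, a, (hconst b a).2 hlt.le, fun h => hlt.not_ge ((hconst a b).1 h)⟩
    · exact ⟨a, b, (hconst a b).2 hlt.le, fun h => hlt.not_ge ((hconst b a).1 h)⟩
  · exact Finset.sum_le_sum fun t _ =>
      mul_le_mul_of_nonneg_left ((hconst _ _).1 (hxy t)) (hw t)

end FiniteHorizon

theorem aa_representation_finite_general {X : Type*} (M : MixtureSpace X) (n : ℕ)
    (R : (Fin n → X) → (Fin n → X) → Prop) :
    (AxF1 R ∧ AxF2 R ∧ AxF3 M R ∧ AxF4 M R ∧ AxF5 R) ↔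
    ∃ (u : X → ℝ) (w : Fin n → ℝ), AARep M R u w :=
  ⟨fun ⟨h1, h2, h3, h4, h5⟩ => exists_aaRep_of_axioms h1 h2 h3 h4 h5,
    fun ⟨_, _, hrep⟩ => axioms_of_aaRep hrep⟩

/-- The AA representation theorem on `X^n` (finite horizon):
`≽` satisfies F1–F5 iff it has an AA representation. -/
theorem aa_representation_finite {X : Type*} (M : MixtureSpace X) (n : ℕ) (hn : 0 < n)
    (R : (Fin n → X) → (Fin n → X) → Prop) :
    (AxF1 R ∧ AxF2 R ∧ AxF3 M R ∧ AxF4 M R ∧ AxF5 R) ↔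
    ∃ (u : X → ℝ) (w : Fin n → ℝ), AARep M R u w :=
  aa_representation_finite_general M n R
end

section
/- Let X be a mixture set, n a positive integer, and ≽ a binary relation on X^n. If (u, w) and (u′, w′) both provide AA representations for ≽ on X^n, then there exist A > 0 and B ∈ ℝ such that u = Au′ + B, and there exists C > 0 such that w = Cw′. -/
/-! Comparing constant streams shows that `u` and `u'` order `X` in the same way. If `f` and `g`
are mixture linear and `g p ≤ g q` forces `f p ≤ f q`, then whenever `g r` lies between `g q` and
`g p`, the point `r` has the same `g`-value as some mixture `m` of `p` and `q`, hence also
`f r = f m`; so the points `(g x, f x)` for `x = p, q, r` are collinear, and `f` is an affine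
function of `g`. For the weights, with `u b < u a`, the stream carrying `a` in period `t` and `b`
elsewhere is weakly preferred to the constant stream at `M.mix a c b` exactly when
`c ≤ w t / ∑ s, w s`, so this normalized weight is determined by the relation alone. -/

namespace MixtureSpace

variable {X : Type*} (M : MixtureSpace X) {f g : X → ℝ}

theorem linear_collinear_of_le_of_le (hf : M.linear f) (hg : M.linear g)
    (hfg : ∀ p q, g p ≤ g q → f p ≤ f q) {p q r : X} (hqr : g q ≤ g r) (hrp : g r ≤ g p) :
    (g p - g q) * (f r - f q) = (g r - g q) * (f p - f q) := by
  rcases hqr.trans hrp |>.eq_or_lt with hpq | hpq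
  · have hrq : g r = g q := le_antisymm (hpq ▸ hrp) hqr
    rw [← hpq, hrq]
    ring
  set l := (g r - g q) / (g p - g q) with hl_def
  have hl : l ∈ Set.Icc (0 : ℝ) 1 :=
    ⟨div_nonneg (by linarith) (by linarith), (div_le_one (by linarith)).2 (by linarith)⟩
  have hg_mix : g (M.mix p l q) = g r := by
    rw [hg p q l hl, hl_def]
    field_simp
    ring
  have hf_mix : f (M.mix p l q) = f r :=
    le_antisymm (hfg _ _ hg_mix.le) (hfg _ _ hg_mix.ge)
  rw [hf p q l hl] at hf_mix
  rw [← hf_mix, hl_def]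
  field_simp
  ring

theorem linear_collinear (hf : M.linear f) (hg : M.linear g)
    (hfg : ∀ p q, g p ≤ g q → f p ≤ f q) (p q r : X) :
    (g p - g q) * (f r - f q) = (g r - g q) * (f p - f q) := by
  have key {p q r : X} (hqr : g q ≤ g r) (hrp : g r ≤ g p) :=
    M.linear_collinear_of_le_of_le hf hg hfg hqr hrp
  rcases le_total (g q) (g r) with hqr | hrq <;> rcases le_total (g r) (g p) with hrp | hpr
  · exact key hqr hrp
  · rcases le_total (g q) (g p) with hqp | hpq
    · linear_combination -key hqp hpr
    · linear_combination key hpq hqr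
  · rcases le_total (g q) (g p) with hqp | hpq
    · linear_combination -key hrq hqp
    · linear_combination key hrp hpq
  · linear_combination -key hpr hrq

theorem exists_pos_affine_of_linear (hf : M.linear f) (hg : M.linear g)
    (hfg : ∀ p q, g p ≤ g q → f p ≤ f q) {a b : X} (hab : f b < f a) :
    ∃ A > (0 : ℝ), ∃ B : ℝ, ∀ x, f x = A * g x + B := by
  have hgab : g b < g a := lt_of_not_ge fun h ↦ hab.not_ge (hfg a b h)
  refine ⟨(f a - f b) / (g a - g b), div_pos (by linarith) (by linarith),
    f b - (f a - f b) / (g a - g b) * g b, fun x ↦ ?_⟩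
  have hd : g a - g b ≠ 0 := (sub_pos.2 hgab).ne'
  have := M.linear_collinear hf hg hfg a b x
  field_simp
  linear_combination this

end MixtureSpace

theorem sum_mul_update_const {ι X : Type*} [Fintype ι] [DecidableEq ι] (w : ι → ℝ) (u : X → ℝ)
    (a b : X) (t : ι) :
    ∑ s, w s * u (Function.update (fun _ ↦ b) t a s) = (∑ s, w s) * u b + w t * (u a - u b) := by
  rw [← sub_eq_iff_eq_add', Finset.sum_mul, ← Finset.sum_sub_distrib, Fintype.sum_eq_single t]
  · simp only [Function.update_self]
    ring
  · intro s hs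
    simp [hs]

namespace AARep

variable {X : Type*} {M : MixtureSpace X} {n : ℕ} {R : (Fin n → X) → (Fin n → X) → Prop}
  {u : X → ℝ} {w : Fin n → ℝ}

theorem sum_weight_pos (h : AARep M R u w) : 0 < ∑ t, w t := by
  obtain ⟨-, -, hw, ⟨t, ht⟩, -⟩ := h
  exact Finset.sum_pos' (fun s _ ↦ hw s) ⟨t, Finset.mem_univ t, ht⟩

theorem rel_const_iff (h : AARep M R u w) (p q : X) :
    R (fun _ ↦ p) (fun _ ↦ q) ↔ u q ≤ u p := by
  have hW := h.sum_weight_pos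
  obtain ⟨-, -, -, -, hrep⟩ := h
  rw [hrep, ge_iff_le, ← Finset.sum_mul, ← Finset.sum_mul]
  exact mul_le_mul_iff_right₀ hW

theorem rel_update_const_iff (h : AARep M R u w) {a b : X} (hab : u b < u a) (t : Fin n)
    {c : ℝ} (hc : c ∈ Set.Icc (0 : ℝ) 1) :
    R (Function.update (fun _ ↦ b) t a) (fun _ ↦ M.mix a c b) ↔ c * ∑ s, w s ≤ w t := by
  have hdiff : (∑ s, w s) * u b + w t * (u a - u b) - (∑ s, w s) * (c * u a + (1 - c) * u b)
      = (w t - c * ∑ s, w s) * (u a - u b) := by ring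
  obtain ⟨hu, -, -, -, hrep⟩ := h
  rw [hrep, sum_mul_update_const, ← Finset.sum_mul, hu a b c hc, ge_iff_le, ← sub_nonneg,
    hdiff, mul_nonneg_iff_of_pos_right (sub_pos.2 hab), sub_nonneg]

theorem weight_div_sum_le {u' : X → ℝ} {w' : Fin n → ℝ} (h : AARep M R u w)
    (h' : AARep M R u' w') {a b : X} (hab : u b < u a) (hab' : u' b < u' a) (t : Fin n) :
    w t / ∑ s, w s ≤ w' t / ∑ s, w' s := by
  have hW := h.sum_weight_pos
  have hw := h.2.2.1
  have hc : w t / ∑ s, w s ∈ Set.Icc (0 : ℝ) 1 :=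
    ⟨div_nonneg (hw t) hW.le,
      (div_le_one hW).2 (Finset.single_le_sum (fun s _ ↦ hw s) (Finset.mem_univ t))⟩
  have hR := (h.rel_update_const_iff hab t hc).2 (div_mul_cancel₀ _ hW.ne').le
  exact (le_div_iff₀ h'.sum_weight_pos).2 ((h'.rel_update_const_iff hab' t hc).1 hR)

end AARep

theorem aa_representation_finite_unique_general {X : Type*} (M : MixtureSpace X)
    (n : ℕ) (R : (Fin n → X) → (Fin n → X) → Prop)
    (u u' : X → ℝ) (w w' : Fin n → ℝ)
    (h : AARep M R u w) (h' : AARep M R u' w') :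
    (∃ A > (0:ℝ), ∃ B : ℝ, ∀ x : X, u x = A * u' x + B) ∧
    (∃ C > (0:ℝ), ∀ t : Fin n, w t = C * w' t) := by
  have hmono : ∀ p q, u' p ≤ u' q → u p ≤ u q := fun p q hpq ↦
    (h.rel_const_iff q p).1 ((h'.rel_const_iff q p).2 hpq)
  obtain ⟨a, b, hab⟩ : ∃ a b, u b < u a := by
    obtain ⟨a, b, hne⟩ := h.2.1
    rcases hne.lt_or_gt with hlt | hlt
    exacts [⟨b, a, hlt⟩, ⟨a, b, hlt⟩]
  have hab' : u' b < u' a := lt_of_not_ge fun hle ↦ hab.not_ge (hmono a b hle)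
  refine ⟨M.exists_pos_affine_of_linear h.1 h'.1 hmono hab, ?_⟩
  have hW := h.sum_weight_pos
  have hW' := h'.sum_weight_pos
  refine ⟨(∑ s, w s) / ∑ s, w' s, div_pos hW hW', fun t ↦ ?_⟩
  have hshare : w t / ∑ s, w s = w' t / ∑ s, w' s :=
    le_antisymm (h.weight_div_sum_le h' hab hab' t) (h'.weight_div_sum_le h hab' hab t)
  rw [div_eq_div_iff hW.ne' hW'.ne'] at hshare
  rw [div_mul_eq_mul_div, eq_div_iff hW'.ne', mul_comm _ (w' t)]
  exact hshare

/-- Uniqueness of the AA representation on `X^n`. -/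
theorem aa_representation_finite_unique {X : Type*} (M : MixtureSpace X)
    (n : ℕ) (hn : 0 < n) (R : (Fin n → X) → (Fin n → X) → Prop)
    (u u' : X → ℝ) (w w' : Fin n → ℝ)
    (h : AARep M R u w) (h' : AARep M R u' w') :
    (∃ A > (0:ℝ), ∃ B : ℝ, ∀ x : X, u x = A * u' x + B) ∧
    (∃ C > (0:ℝ), ∀ t : Fin n, w t = C * w' t) :=
  aa_representation_finite_unique_general M n R u u' w w' h h'
end

section
/- Let X be a mixture set and ≽ a binary relation on X^∞. If (u, w) and (u′, w′) both provide AA representations for ≽ on X^∞, then there exist A > 0 and B ∈ ℝ such that u = Au′ + B, and there exists C > 0 such that w_t = Cw′_t for all t. -/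
open Filter Finset in
private lemma uvals_aux {X : Type*} (M : MixtureSpace X) (u : X → ℝ) (w : ℕ → ℝ)
    (hlin : M.linear u) (t0 : ℕ) (ht0 : 0 < w t0) (hw : ∀ t, 0 ≤ w t)
    (U : (ℕ → X) → ℝ)
    (hU : ∀ x : ℕ → X, Tendsto (fun N => ∑ t ∈ range N, w t * u (x t)) atTop (nhds (U x)))
    (c : X) (hc : u c ≠ 0) :
    ∃ W : ℝ, 0 < W ∧ (∀ p : X, U (fun _ => p) = W * u p) ∧
      ∀ (a b : X) (j : ℕ), ∀ l : ℝ, 0 ≤ l → l ≤ 1 →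
        U (mixSeq M (fun t => if t = j then a else b) l (fun _ => b))
          = W * u b + l * (w j * (u a - u b)) := by
  set S : ℕ → ℝ := fun N => ∑ t ∈ range N, w t with hS
  have h1 : ∀ p : X, Tendsto (fun N => S N * u p) atTop (nhds (U (fun _ => p))) := by
    intro p
    have := hU (fun _ => p)
    simpa [hS, Finset.sum_mul] using this
  set W := U (fun _ => c) / u c with hW
  have hSW : Tendsto S atTop (nhds W) := by
    have h2 := (h1 c).mul_const (u c)⁻¹
    have h3 : (fun N => S N * u c * (u c)⁻¹) = S := by
      funext N; field_simp
    rw [h3] at h2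
    simpa [hW, div_eq_mul_inv] using h2
  have hconst : ∀ p, U (fun _ => p) = W * u p := fun p =>
    tendsto_nhds_unique (h1 p) (hSW.mul_const (u p))
  have hWpos : 0 < W := by
    have hle : w t0 ≤ W := by
      apply ge_of_tendsto hSW
      filter_upwards [eventually_ge_atTop (t0 + 1)] with N hN
      exact Finset.single_le_sum (fun t _ => hw t) (by simp [Finset.mem_range]; omega)
    linarith
  refine ⟨W, hWpos, hconst, ?_⟩
  intro a b j l hl0 hl1
  set x : ℕ → X := mixSeq M (fun t => if t = j then a else b) l (fun _ => b) with hx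
  have hux : ∀ t, u (x t) = l * u (if t = j then a else b) + (1 - l) * u b := by
    intro t; exact hlin _ _ l ⟨hl0, hl1⟩
  have hsum : ∀ N, (∑ t ∈ range N, w t * u (x t))
      = l * (S N * u b + (if j ∈ range N then w j * (u a - u b) else 0))
        + (1 - l) * (S N * u b) := by
    intro N
    have hpt : ∀ t, w t * u (x t)
        = l * (w t * u b + (if t = j then w t * (u a - u b) else 0)) + (1 - l) * (w t * u b) := by
      intro t
      rw [hux t]
      by_cases h : t = j <;> simp [h] <;> ring
    calc (∑ t ∈ range N, w t * u (x t))
        = ∑ t ∈ range N, (l * (w t * u b + (if t = j then w t * (u a - u b) else 0))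
            + (1 - l) * (w t * u b)) := Finset.sum_congr rfl (fun t _ => hpt t)
      _ = l * (S N * u b + (if j ∈ range N then w j * (u a - u b) else 0))
            + (1 - l) * (S N * u b) := by
          rw [Finset.sum_add_distrib, ← Finset.mul_sum, ← Finset.mul_sum,
            Finset.sum_add_distrib, ← Finset.sum_mul,
            Finset.sum_ite_eq' (range N) j (fun t => w t * (u a - u b))]
  have hind : Tendsto (fun N => (if j ∈ range N then w j * (u a - u b) else 0)) atTop
      (nhds (w j * (u a - u b))) := by
    apply tendsto_const_nhds.congr'
    filter_upwards [eventually_ge_atTop (j + 1)] with N hN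
    rw [if_pos (Finset.mem_range.mpr (by omega))]
  have hlim : Tendsto (fun N => l * (S N * u b + (if j ∈ range N then w j * (u a - u b) else 0))
      + (1 - l) * (S N * u b)) atTop
      (nhds (l * (W * u b + w j * (u a - u b)) + (1 - l) * (W * u b))) :=
    (((hSW.mul_const (u b)).add hind).const_mul l).add ((hSW.mul_const (u b)).const_mul (1 - l))
  have h3 := hlim.congr (fun N => (hsum N).symm)
  have h4 := tendsto_nhds_unique (hU x) h3
  rw [h4]; ring

private lemma ratio_aux (w w' : ℕ → ℝ) (hw : ∀ t, 0 ≤ w t) (hw' : ∀ t, 0 ≤ w' t)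
    (t0 t1 : ℕ) (ht0 : 0 < w t0) (ht1 : 0 < w' t1)
    (key : ∀ k j : ℕ, ∀ l : ℝ, 0 ≤ l → l ≤ 1 → (l * w j ≤ w k ↔ l * w' j ≤ w' k)) :
    ∃ C > (0:ℝ), ∀ t, w t = C * w' t := by
  have ht0' : 0 < w' t0 := by
    rcases (hw' t0).lt_or_eq with h | h
    · exact h
    · exfalso
      rcases (hw t1).lt_or_eq with h1 | h1
      · set l := min 1 (w t0 / w t1) with hl
        have hl0 : 0 < l := lt_min one_pos (div_pos ht0 h1)
        have hlw : l * w t1 ≤ w t0 := by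
          calc l * w t1 ≤ (w t0 / w t1) * w t1 :=
                mul_le_mul_of_nonneg_right (min_le_right _ _) (hw t1)
            _ = w t0 := div_mul_cancel₀ _ h1.ne'
        have h2 := (key t0 t1 l hl0.le (min_le_left _ _)).mp hlw
        nlinarith [mul_pos hl0 ht1]
      · have h2 := (key t0 t1 1 zero_le_one le_rfl).mp (by rw [← h1]; linarith)
        rw [← h] at h2; linarith
  refine ⟨w t0 / w' t0, div_pos ht0 ht0', ?_⟩
  have main : ∀ k j : ℕ, 0 < w k → 0 < w j → 0 < w' j → w k ≤ w j →
      w k * w' j = w' k * w j := by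
    intro k j hk hj hj' hkj
    have h1 : (w k / w j) * w' j ≤ w' k := by
      refine (key k j (w k / w j) (div_nonneg hk.le hj.le) ((div_le_one hj).mpr hkj)).mp ?_
      rw [div_mul_cancel₀ _ hj.ne']
    have h2 : w' k ≤ w' j := by
      by_contra hcon
      push_neg at hcon
      have h3 := (key j k 1 zero_le_one le_rfl).mp (by linarith)
      linarith
    have h3 : (w' k / w' j) * w j ≤ w k := by
      refine (key k j (w' k / w' j) (div_nonneg (hw' k) hj'.le) ((div_le_one hj').mpr h2)).mpr ?_
      rw [div_mul_cancel₀ _ hj'.ne']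
    rw [div_mul_eq_mul_div, div_le_iff₀ hj] at h1
    rw [div_mul_eq_mul_div, div_le_iff₀ hj'] at h3
    linarith
  intro t
  rcases (hw t).lt_or_eq with ht | ht
  · have ht' : 0 < w' t := by
      rcases (hw' t).lt_or_eq with h | h
      · exact h
      · exfalso
        set l := min 1 (w t / w t0) with hl
        have hl0 : 0 < l := lt_min one_pos (div_pos ht ht0)
        have hlw : l * w t0 ≤ w t := by
          calc l * w t0 ≤ (w t / w t0) * w t0 :=
                mul_le_mul_of_nonneg_right (min_le_right _ _) (hw t0)
            _ = w t := div_mul_cancel₀ _ ht0.ne'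
        have h2 := (key t t0 l hl0.le (min_le_left _ _)).mp hlw
        nlinarith [mul_pos hl0 ht0']
    have hne : w' t0 ≠ 0 := ht0'.ne'
    rcases le_total (w t) (w t0) with hle | hle
    · have h5 := main t t0 ht ht0 ht0' hle
      field_simp
      linarith
    · have h5 := main t0 t ht0 ht ht' hle
      field_simp
      linarith
  · have ht' : w' t = 0 := by
      by_contra hcon
      have h1 : 0 < w' t := (hw' t).lt_of_ne (Ne.symm hcon)
      set l := min 1 (w' t / w' t0) with hl
      have hl0 : 0 < l := lt_min one_pos (div_pos h1 ht0')
      have hlw : l * w' t0 ≤ w' t := by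
        calc l * w' t0 ≤ (w' t / w' t0) * w' t0 :=
              mul_le_mul_of_nonneg_right (min_le_right _ _) (hw' t0)
          _ = w' t := div_mul_cancel₀ _ ht0'.ne'
      have h2 := (key t t0 l hl0.le (min_le_left _ _)).mpr hlw
      nlinarith [mul_pos hl0 ht0]
    rw [← ht, ht', mul_zero]

/-- Uniqueness of the AA representation on `X^∞`. -/
theorem aa_representation_infinite_unique {X : Type*} (M : MixtureSpace X)
    (R : (ℕ → X) → (ℕ → X) → Prop) (u u' : X → ℝ) (w w' : ℕ → ℝ)
    (h : AARepInf M R u w) (h' : AARepInf M R u' w') :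
    (∃ A > (0:ℝ), ∃ B : ℝ, ∀ x : X, u x = A * u' x + B) ∧
    (∃ C > (0:ℝ), ∀ t : ℕ, w t = C * w' t) := by
  obtain ⟨hlin, ⟨a0, b0, hab0⟩, hw, ⟨t0, ht0⟩, U, hU, hR⟩ := h
  obtain ⟨hlin', ⟨a0', b0', hab0'⟩, hw', ⟨t1, ht1⟩, U', hU', hR'⟩ := h'
  obtain ⟨c, hc⟩ : ∃ c, u c ≠ 0 := by
    by_cases h0 : u a0 = 0
    · exact ⟨b0, fun hb => hab0 (by rw [h0, hb])⟩
    · exact ⟨a0, h0⟩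
  obtain ⟨c', hc'⟩ : ∃ c, u' c ≠ 0 := by
    by_cases h0 : u' a0' = 0
    · exact ⟨b0', fun hb => hab0' (by rw [h0, hb])⟩
    · exact ⟨a0', h0⟩
  obtain ⟨W, hWpos, hconst, hmixU⟩ := uvals_aux M u w hlin t0 ht0 hw U hU c hc
  obtain ⟨W', hW'pos, hconst', hmixU'⟩ := uvals_aux M u' w' hlin' t1 ht1 hw' U' hU' c' hc'
  have E : ∀ p q : X, u q ≤ u p ↔ u' q ≤ u' p := by
    intro p q
    have h1 := hR (fun _ => p) (fun _ => q)
    have h2 := hR' (fun _ => p) (fun _ => q)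
    rw [hconst, hconst] at h1
    rw [hconst', hconst'] at h2
    constructor
    · intro hpq
      have hr : R (fun _ => p) (fun _ => q) :=
        h1.mpr (mul_le_mul_of_nonneg_left hpq hWpos.le)
      exact le_of_mul_le_mul_left (h2.mp hr) hW'pos
    · intro hpq
      have hr : R (fun _ => p) (fun _ => q) :=
        h2.mpr (mul_le_mul_of_nonneg_left hpq hW'pos.le)
      exact le_of_mul_le_mul_left (h1.mp hr) hWpos
  have Eeq : ∀ p q : X, u' p = u' q → u p = u q := fun p q hpq =>
    le_antisymm ((E q p).mpr hpq.le) ((E p q).mpr hpq.ge)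
  obtain ⟨a, b, hba⟩ : ∃ a b : X, u b < u a := by
    rcases lt_or_gt_of_ne hab0 with hlt | hlt
    · exact ⟨b0, a0, hlt⟩
    · exact ⟨a0, b0, hlt⟩
  have hba' : u' b < u' a := by
    rcases lt_or_ge (u' b) (u' a) with hlt | hle
    · exact hlt
    · exact absurd ((E b a).mpr hle) (not_le.mpr hba)
  have hΔ : (0:ℝ) < u a - u b := sub_pos.mpr hba
  have hΔ' : (0:ℝ) < u' a - u' b := sub_pos.mpr hba'
  have hΔ'ne : u' a - u' b ≠ 0 := hΔ'.ne'
  constructor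
  · refine ⟨(u a - u b) / (u' a - u' b), div_pos hΔ hΔ',
      u b - (u a - u b) / (u' a - u' b) * u' b, ?_⟩
    intro x
    rcases lt_or_ge (u' x) (u' b) with hxb | hxb
    · -- u' x < u' b
      have hd : (0:ℝ) < u' a - u' x := by linarith
      set l := (u' b - u' x) / (u' a - u' x) with hldef
      have hl0 : 0 ≤ l := div_nonneg (by linarith) hd.le
      have hl1 : l ≤ 1 := by rw [div_le_one hd]; linarith
      have hlc : l * (u' a - u' x) = u' b - u' x := div_mul_cancel₀ _ hd.ne'
      have hm' : u' (M.mix a l x) = u' b := by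
        rw [hlin' a x l ⟨hl0, hl1⟩]; nlinarith [hlc]
      have hm : u (M.mix a l x) = u b := Eeq _ _ hm'
      have hlm : u (M.mix a l x) = l * u a + (1 - l) * u x := hlin a x l ⟨hl0, hl1⟩
      have heq2 : l * u a + (1 - l) * u x = u b := by rw [← hlm, hm]
      have heq4 : (u' b - u' x) * u a + ((u' a - u' x) - (u' b - u' x)) * u x
          = (u' a - u' x) * u b := by
        rw [← hlc]; linear_combination (u' a - u' x) * heq2
      have hgoal : (u' a - u' b) * (u x - u b) = (u a - u b) * (u' x - u' b) := by
        linear_combination heq4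
      calc u x = u b + ((u' a - u' b) * (u x - u b)) / (u' a - u' b) := by
            rw [mul_div_cancel_left₀ _ hΔ'ne]; ring
        _ = u b + ((u a - u b) * (u' x - u' b)) / (u' a - u' b) := by rw [hgoal]
        _ = _ := by ring
    rcases le_or_gt (u' x) (u' a) with hxa | hxa
    · -- u' b ≤ u' x ≤ u' a
      set l := (u' x - u' b) / (u' a - u' b) with hldef
      have hl0 : 0 ≤ l := div_nonneg (by linarith) hΔ'.le
      have hl1 : l ≤ 1 := by rw [div_le_one hΔ']; linarith
      have hlc : l * (u' a - u' b) = u' x - u' b := div_mul_cancel₀ _ hΔ'ne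
      have hm' : u' (M.mix a l b) = u' x := by
        rw [hlin' a b l ⟨hl0, hl1⟩]; nlinarith [hlc]
      have hm : u (M.mix a l b) = u x := Eeq _ _ hm'
      have hlm : u (M.mix a l b) = l * u a + (1 - l) * u b := hlin a b l ⟨hl0, hl1⟩
      have heq2 : l * u a + (1 - l) * u b = u x := by rw [← hlm, hm]
      have heq4 : (u' x - u' b) * u a + ((u' a - u' b) - (u' x - u' b)) * u b
          = (u' a - u' b) * u x := by
        rw [← hlc]; linear_combination (u' a - u' b) * heq2
      have hgoal : (u' a - u' b) * (u x - u b) = (u a - u b) * (u' x - u' b) := by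
        linear_combination -heq4
      calc u x = u b + ((u' a - u' b) * (u x - u b)) / (u' a - u' b) := by
            rw [mul_div_cancel_left₀ _ hΔ'ne]; ring
        _ = u b + ((u a - u b) * (u' x - u' b)) / (u' a - u' b) := by rw [hgoal]
        _ = _ := by ring
    · -- u' a < u' x
      have hd : (0:ℝ) < u' x - u' b := by linarith
      set l := (u' a - u' b) / (u' x - u' b) with hldef
      have hl0 : 0 ≤ l := div_nonneg hΔ'.le hd.le
      have hl1 : l ≤ 1 := by rw [div_le_one hd]; linarith
      have hlc : l * (u' x - u' b) = u' a - u' b := div_mul_cancel₀ _ hd.ne'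
      have hm' : u' (M.mix x l b) = u' a := by
        rw [hlin' x b l ⟨hl0, hl1⟩]; nlinarith [hlc]
      have hm : u (M.mix x l b) = u a := Eeq _ _ hm'
      have hlm : u (M.mix x l b) = l * u x + (1 - l) * u b := hlin x b l ⟨hl0, hl1⟩
      have heq2 : l * u x + (1 - l) * u b = u a := by rw [← hlm, hm]
      have heq4 : (u' a - u' b) * u x + ((u' x - u' b) - (u' a - u' b)) * u b
          = (u' x - u' b) * u a := by
        rw [← hlc]; linear_combination (u' x - u' b) * heq2
      have hgoal : (u' a - u' b) * (u x - u b) = (u a - u b) * (u' x - u' b) := by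
        linear_combination heq4
      calc u x = u b + ((u' a - u' b) * (u x - u b)) / (u' a - u' b) := by
            rw [mul_div_cancel_left₀ _ hΔ'ne]; ring
        _ = u b + ((u a - u b) * (u' x - u' b)) / (u' a - u' b) := by rw [hgoal]
        _ = _ := by ring
  · have key : ∀ k j : ℕ, ∀ l : ℝ, 0 ≤ l → l ≤ 1 → (l * w j ≤ w k ↔ l * w' j ≤ w' k) := by
      intro k j l hl0 hl1
      have hx := hmixU a b k 1 zero_le_one le_rfl
      have hy := hmixU a b j l hl0 hl1
      have hx' := hmixU' a b k 1 zero_le_one le_rfl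
      have hy' := hmixU' a b j l hl0 hl1
      have hRxy := hR (mixSeq M (fun t => if t = k then a else b) 1 (fun _ => b))
        (mixSeq M (fun t => if t = j then a else b) l (fun _ => b))
      have hRxy' := hR' (mixSeq M (fun t => if t = k then a else b) 1 (fun _ => b))
        (mixSeq M (fun t => if t = j then a else b) l (fun _ => b))
      rw [hx, hy] at hRxy
      rw [hx', hy'] at hRxy'
      constructor
      · intro hkj
        have hr := hRxy.mpr (by nlinarith [mul_le_mul_of_nonneg_right hkj hΔ.le])
        have h5 := hRxy'.mp hr
        have h6 : (l * w' j) * (u' a - u' b) ≤ w' k * (u' a - u' b) := by nlinarith [h5]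
        exact le_of_mul_le_mul_right h6 hΔ'
      · intro hkj
        have hr := hRxy'.mpr (by nlinarith [mul_le_mul_of_nonneg_right hkj hΔ'.le])
        have h5 := hRxy.mp hr
        have h6 : (l * w j) * (u a - u b) ≤ w k * (u a - u b) := by nlinarith [h5]
        exact le_of_mul_le_mul_right h6 hΔ
    exact ratio_aux w w' hw hw' t0 t1 ht0 ht1 key
end

section
/- Let X be a mixture set, n ≥ 2 a finite integer, and ≽ a binary relation on X^n. If (u, δ) and (u′, δ′) both provide exponentially discounted expected utility representations for ≽ on X^n, then there exist A > 0 and B ∈ ℝ with u = Au′ + B, and δ = δ′. -/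
/-!
Both representations rank constant streams by the utility of their common outcome, so `u` and
`u'` induce the same weak order on `X`. Two mixture-linear functions inducing the same order are
positive affine transforms of each other: every outcome is matched in utility by a mixture of two
others, and mixture linearity fixes the mixing weight. For the discount factor, choose `c` with
`(1 + δ) u(c) = u(a) + δ u(b)`; then `(a, b, b, …)` and `(c, c, b, …)` are indifferent, and reading
this indifference through `(u', δ')` forces `δ' = δ`.
-/

namespace MixtureSpace.linear

variable {X : Type*} {M : MixtureSpace X} {u u' : X → ℝ}

theorem mix_inv_one_add (hu : M.linear u) {δ : ℝ} (hδ : 0 ≤ δ) (a b : X) :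
    (1 + δ) * u (M.mix a (1 + δ)⁻¹ b) = u a + δ * u b := by
  have hl : (1 + δ)⁻¹ ∈ Set.Icc (0 : ℝ) 1 :=
    ⟨by positivity, inv_le_one_of_one_le₀ (by linarith)⟩
  rw [hu a b _ hl]
  field_simp
  ring

theorem sub_mul_sub_eq_of_le_iff (hu : M.linear u) (hu' : M.linear u')
    (hord : ∀ p q, u p ≤ u q ↔ u' p ≤ u' q) {p q r : X}
    (hpq : u p ≤ u q) (hqr : u q ≤ u r) (hpr : u p < u r) :
    (u q - u p) * (u' r - u' p) = (u' q - u' p) * (u r - u p) := by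
  set l := (u q - u p) / (u r - u p)
  have hl : l ∈ Set.Icc (0 : ℝ) 1 :=
    ⟨div_nonneg (by linarith) (by linarith), (div_le_one (by linarith)).2 (by linarith)⟩
  have hlu : l * (u r - u p) = u q - u p := div_mul_cancel₀ _ (by linarith)
  have hmix : u (M.mix r l p) = u q := by rw [hu r p l hl]; linear_combination hlu
  have hmix' : u' (M.mix r l p) = u' q :=
    le_antisymm ((hord _ _).1 hmix.le) ((hord _ _).1 hmix.ge)
  rw [hu' r p l hl] at hmix'
  linear_combination (u r - u p) * hmix' - (u' r - u' p) * hlu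

theorem exists_pos_affine_of_le_iff (hu : M.linear u) (hu' : M.linear u')
    (hord : ∀ p q, u p ≤ u q ↔ u' p ≤ u' q) (hne : ∃ a b, u a ≠ u b) :
    ∃ A > (0 : ℝ), ∃ B : ℝ, ∀ x, u x = A * u' x + B := by
  obtain ⟨a, b, hab⟩ : ∃ a b, u b < u a := by
    obtain ⟨a, b, hab⟩ := hne
    rcases hab.lt_or_gt with h | h
    exacts [⟨b, a, h⟩, ⟨a, b, h⟩]
  have hab' : u' b < u' a := lt_of_not_ge fun h => hab.not_ge ((hord a b).2 h)
  have hratio : ∀ x, (u x - u b) * (u' a - u' b) = (u' x - u' b) * (u a - u b) := by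
    intro x
    rcases le_or_gt (u x) (u b) with hxb | hbx
    · linear_combination -sub_mul_sub_eq_of_le_iff hu hu' hord hxb hab.le (hxb.trans_lt hab)
    rcases le_or_gt (u x) (u a) with hxa | hax
    · exact sub_mul_sub_eq_of_le_iff hu hu' hord hbx.le hxa hab
    · linear_combination -sub_mul_sub_eq_of_le_iff hu hu' hord hab.le hax.le (hab.trans hax)
  refine ⟨(u a - u b) / (u' a - u' b), div_pos (by linarith) (by linarith),
    u b - (u a - u b) / (u' a - u' b) * u' b, fun x => ?_⟩
  have : u' a - u' b ≠ 0 := sub_ne_zero.2 hab'.ne'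
  field_simp
  linear_combination hratio x

end MixtureSpace.linear

def discountedSum {X : Type*} {n : ℕ} (v : X → ℝ) (δ : ℝ) (x : Fin n → X) : ℝ :=
  ∑ t : Fin n, δ ^ (t : ℕ) * v (x t)

theorem discountedSum_cons_cons {X : Type*} {k : ℕ} (v : X → ℝ) (δ : ℝ) (p q : X)
    (z : Fin k → X) :
    discountedSum v δ (Fin.cons p (Fin.cons q z) : Fin (k + 2) → X) =
      v p + δ * v q + δ ^ 2 * discountedSum v δ z := by
  simp only [discountedSum, Fin.sum_univ_succ, Fin.cons_zero, Fin.cons_succ, Fin.val_zero,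
    Fin.val_succ, Finset.mul_sum]
  ring_nf

theorem discountedSum_const {X : Type*} {n : ℕ} (v : X → ℝ) (δ : ℝ) (p : X) :
    discountedSum v δ (fun _ : Fin n => p) = (∑ t : Fin n, δ ^ (t : ℕ)) * v p :=
  (Finset.sum_mul ..).symm

namespace ExpRep

variable {X : Type*} {M : MixtureSpace X} {n : ℕ} {R : (Fin n → X) → (Fin n → X) → Prop}
  {u u' : X → ℝ} {δ δ' : ℝ}

theorem rel_iff (h : ExpRep M R u δ) (x y : Fin n → X) :
    R x y ↔ discountedSum u δ y ≤ discountedSum u δ x :=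
  h.2.2.2 x y

theorem indiff_iff (h : ExpRep M R u δ) (x y : Fin n → X) :
    R x y ∧ R y x ↔ discountedSum u δ x = discountedSum u δ y := by
  rw [h.rel_iff, h.rel_iff, le_antisymm_iff, and_comm]

theorem rel_const_iff (h : ExpRep M R u δ) (hn : 0 < n) (p q : X) :
    R (fun _ => p) (fun _ => q) ↔ u q ≤ u p := by
  have hpos : 0 < ∑ t : Fin n, δ ^ (t : ℕ) :=
    haveI : Nonempty (Fin n) := ⟨⟨0, hn⟩⟩
    Finset.sum_pos (fun _ _ => pow_pos h.2.2.1.1 _) Finset.univ_nonempty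
  rw [h.rel_iff, discountedSum_const, discountedSum_const, mul_le_mul_iff_right₀ hpos]

theorem le_iff_le (h : ExpRep M R u δ) (h' : ExpRep M R u' δ') (hn : 0 < n) (p q : X) :
    u p ≤ u q ↔ u' p ≤ u' q := by
  rw [← h.rel_const_iff hn, h'.rel_const_iff hn]

end ExpRep

/-- Uniqueness of the exponentially discounted expected utility
representation on `X^n`. -/
theorem exp_discounting_finite_unique {X : Type*} (M : MixtureSpace X)
    (n : ℕ) (hn : 2 ≤ n) (R : (Fin n → X) → (Fin n → X) → Prop)
    (u u' : X → ℝ) (δ δ' : ℝ)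
    (h : ExpRep M R u δ) (h' : ExpRep M R u' δ') :
    (∃ A > (0:ℝ), ∃ B : ℝ, ∀ x : X, u x = A * u' x + B) ∧ δ = δ' := by
  obtain ⟨k, rfl⟩ : ∃ k, n = k + 2 := ⟨n - 2, by omega⟩
  obtain ⟨A, hA, B, hAB⟩ :=
    h.1.exists_pos_affine_of_le_iff h'.1 (h.le_iff_le h' (by omega)) h.2.1
  refine ⟨⟨A, hA, B, hAB⟩, ?_⟩
  obtain ⟨a, b, hab⟩ := h.2.1
  have hab' : u' a - u' b ≠ 0 := fun h0 => hab (by rw [hAB, hAB]; linear_combination A * h0)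
  have hδ : 0 ≤ δ := h.2.2.1.1.le
  set c := M.mix a (1 + δ)⁻¹ b
  have hc : (1 + δ) * u c = u a + δ * u b := h.1.mix_inv_one_add hδ a b
  have hc' : (1 + δ) * u' c = u' a + δ * u' b := h'.1.mix_inv_one_add hδ a b
  have hindiff := (h'.indiff_iff _ _).1 <| (h.indiff_iff (Fin.cons a (Fin.cons b fun _ => b))
    (Fin.cons c (Fin.cons c fun _ => b))).2 <| by
      rw [discountedSum_cons_cons, discountedSum_cons_cons]; linear_combination -hc
  rw [discountedSum_cons_cons, discountedSum_cons_cons] at hindiff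
  have hprod : (δ - δ') * (u' a - u' b) = 0 := by
    linear_combination (1 + δ) * hindiff + (1 + δ') * hc'
  exact sub_eq_zero.1 ((mul_eq_zero.1 hprod).resolve_right hab')
end
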